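/- Let υ1, υ2 ∈ (0,1), let ρ(u1,u2) = |u1|^{υ1} + |u2|^{υ2}, and let L : ℝ²∖{(0,0)} → ℝ be a bounded measurable function. Then for all x1, x2 > 0 the function u = (u1,u2) ↦ |1−e^{i u1 x1}|² · |1−e^{i u2 x2}|² · u1^{−2} · u2^{−2} · |L(u)|·ρ(u) is integrable on ℝ². (This establishes the existence of the well-balanced Gaussian limit field V_{0,ρ} defined by the spectral integral with density L·ρ.) -/

import Mathlib

/-! The integrand factors as `|L u| ρ(u)` times `k₁(u.1) k₂(u.2)`, where `k(t) = |1 - e^{itx}|² / t²`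
is at most `min (x ^ 2) (4 / t ^ 2)`, since `|1 - e^{iθ}| ≤ min |θ| 2`. Hence
`k(t) |t| ^ v ≤ c (1 + |t|) ^ (v - 2)`, which is integrable on `ℝ` for `0 ≤ v < 1`. Bounding `|L|`
and splitting `ρ(u) = |u.1| ^ v1 + |u.2| ^ v2` leaves two products of integrable functions of
one variable each. -/

open MeasureTheory Real Filter Topology

noncomputable section

/-- `ρ(x₁,x₂) = |x₁|^{υ₁} + |x₂|^{υ₂}`. -/
def rho (v1 v2 : ℝ) (x : ℝ × ℝ) : ℝ := |x.1| ^ v1 + |x.2| ^ v2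

def incrementKernel (x t : ℝ) : ℝ := ‖(1 : ℂ) - Complex.exp (Complex.I * t * x)‖ ^ 2 / t ^ 2

lemma incrementKernel_nonneg (x t : ℝ) : 0 ≤ incrementKernel x t := by
  unfold incrementKernel
  positivity

lemma norm_one_sub_exp_I_mul_le_two (θ : ℝ) : ‖(1 : ℂ) - Complex.exp (Complex.I * θ)‖ ≤ 2 := by
  calc ‖(1 : ℂ) - Complex.exp (Complex.I * θ)‖
      ≤ ‖(1 : ℂ)‖ + ‖Complex.exp (Complex.I * θ)‖ := norm_sub_le _ _
    _ = 2 := by rw [mul_comm, Complex.norm_exp_ofReal_mul_I]; norm_num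

lemma incrementKernel_mul_one_add_abs_sq_le (x t : ℝ) :
    incrementKernel x t * (1 + |t|) ^ 2 ≤ 2 * (x ^ 2 + 4) := by
  rcases eq_or_ne t 0 with rfl | ht
  · rw [show incrementKernel x 0 = 0 by simp [incrementKernel], zero_mul]
    positivity
  have hcast : Complex.I * t * x = Complex.I * ((t * x : ℝ) : ℂ) := by push_cast; ring
  have ha_small : ‖(1 : ℂ) - Complex.exp (Complex.I * t * x)‖ ≤ |t * x| := by
    rw [← Real.norm_eq_abs, norm_sub_rev, hcast]
    exact Real.norm_exp_I_mul_ofReal_sub_one_le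
  have ha_two : ‖(1 : ℂ) - Complex.exp (Complex.I * t * x)‖ ≤ 2 :=
    hcast ▸ norm_one_sub_exp_I_mul_le_two (t * x)
  set a := ‖(1 : ℂ) - Complex.exp (Complex.I * t * x)‖
  have ha : 0 ≤ a := norm_nonneg _
  have ht2 : 0 < t ^ 2 := by positivity
  rw [incrementKernel, div_mul_eq_mul_div, div_le_iff₀ ht2]
  have hsq : a ^ 2 ≤ t ^ 2 * x ^ 2 := by
    rw [← mul_pow, ← sq_abs (t * x)]
    exact pow_le_pow_left₀ ha ha_small 2
  have hsum : (1 + |t|) ^ 2 ≤ 2 * (1 + t ^ 2) := by nlinarith [sq_nonneg (1 - |t|), sq_abs t]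
  nlinarith [mul_le_mul_of_nonneg_left hsum (sq_nonneg a), pow_le_pow_left₀ ha ha_two 2]

lemma integrable_incrementKernel_mul_abs_rpow (x : ℝ) {v : ℝ} (hv0 : 0 ≤ v) (hv1 : v < 1) :
    Integrable (fun t => incrementKernel x t * |t| ^ v) := by
  have hdom : Integrable (fun t : ℝ => 2 * (x ^ 2 + 4) * (1 + ‖t‖) ^ (-(2 - v))) :=
    (integrable_one_add_norm (by simp; linarith)).const_mul _
  refine hdom.mono' (by unfold incrementKernel; fun_prop) (Eventually.of_forall fun t => ?_)
  have h1 : 0 < 1 + |t| := by positivity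
  have hk := incrementKernel_nonneg x t
  rw [Real.norm_eq_abs, abs_of_nonneg (by positivity), Real.norm_eq_abs]
  calc incrementKernel x t * |t| ^ v
      ≤ incrementKernel x t * (1 + |t|) ^ v := by gcongr; linarith
    _ = incrementKernel x t * (1 + |t|) ^ 2 * (1 + |t|) ^ (-(2 - v)) := by
        rw [mul_assoc, ← rpow_two, ← rpow_add h1]; ring_nf
    _ ≤ 2 * (x ^ 2 + 4) * (1 + |t|) ^ (-(2 - v)) :=
        mul_le_mul_of_nonneg_right (incrementKernel_mul_one_add_abs_sq_le x t) (by positivity)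

lemma integrable_incrementKernel (x : ℝ) : Integrable (incrementKernel x) := by
  simpa using integrable_incrementKernel_mul_abs_rpow x le_rfl one_pos

theorem stmt10_general (v1 v2 : ℝ) (hv1 : v1 ∈ Set.Ioo (0 : ℝ) 1) (hv2 : v2 ∈ Set.Ioo (0 : ℝ) 1)
    (L : ℝ × ℝ → ℝ) (hLmeas : Measurable L)
    (hLbdd : ∃ C : ℝ, ∀ x : ℝ × ℝ, x ≠ 0 → |L x| ≤ C)
    (x1 x2 : ℝ) :
    Integrable (fun u : ℝ × ℝ =>
      ‖(1 : ℂ) - Complex.exp (Complex.I * (u.1 : ℂ) * (x1 : ℂ))‖ ^ 2 *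
        ‖(1 : ℂ) - Complex.exp (Complex.I * (u.2 : ℂ) * (x2 : ℂ))‖ ^ 2 /
          (u.1 ^ 2 * u.2 ^ 2) * (|L u| * rho v1 v2 u)) := by
  obtain ⟨C, hC⟩ := hLbdd
  set k1 := incrementKernel x1
  set k2 := incrementKernel x2
  have hdom : Integrable (fun u : ℝ × ℝ =>
      C * (k1 u.1 * |u.1| ^ v1 * k2 u.2 + k1 u.1 * (k2 u.2 * |u.2| ^ v2))) := by
    rw [Measure.volume_eq_prod]
    refine (Integrable.add ?_ ?_).const_mul C
    · exact (integrable_incrementKernel_mul_abs_rpow x1 hv1.1.le hv1.2).mul_prod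
        (integrable_incrementKernel x2)
    · exact (integrable_incrementKernel x1).mul_prod
        (integrable_incrementKernel_mul_abs_rpow x2 hv2.1.le hv2.2)
  refine hdom.mono' (by unfold rho; fun_prop) ?_
  filter_upwards [(volume : Measure (ℝ × ℝ)).ae_ne 0] with u hu
  have hsplit : ‖(1 : ℂ) - Complex.exp (Complex.I * (u.1 : ℂ) * (x1 : ℂ))‖ ^ 2 *
        ‖(1 : ℂ) - Complex.exp (Complex.I * (u.2 : ℂ) * (x2 : ℂ))‖ ^ 2 /
          (u.1 ^ 2 * u.2 ^ 2) * (|L u| * rho v1 v2 u) =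
      |L u| * (k1 u.1 * |u.1| ^ v1 * k2 u.2 + k1 u.1 * (k2 u.2 * |u.2| ^ v2)) := by
    simp only [k1, k2, incrementKernel, rho, mul_div_mul_comm]
    ring
  have hk1 := incrementKernel_nonneg x1 u.1
  have hk2 := incrementKernel_nonneg x2 u.2
  rw [hsplit, norm_mul, Real.norm_eq_abs, abs_abs, Real.norm_of_nonneg (by positivity)]
  exact mul_le_mul_of_nonneg_right (hC u hu) (by positivity)

theorem stmt10 (v1 v2 : ℝ) (hv1 : v1 ∈ Set.Ioo (0 : ℝ) 1) (hv2 : v2 ∈ Set.Ioo (0 : ℝ) 1)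
    (L : ℝ × ℝ → ℝ) (hLmeas : Measurable L)
    (hLbdd : ∃ C : ℝ, ∀ x : ℝ × ℝ, x ≠ 0 → |L x| ≤ C)
    (x1 x2 : ℝ) (hx1 : 0 < x1) (hx2 : 0 < x2) :
    Integrable (fun u : ℝ × ℝ =>
      ‖(1 : ℂ) - Complex.exp (Complex.I * (u.1 : ℂ) * (x1 : ℂ))‖ ^ 2 *
        ‖(1 : ℂ) - Complex.exp (Complex.I * (u.2 : ℂ) * (x2 : ℂ))‖ ^ 2 /
          (u.1 ^ 2 * u.2 ^ 2) * (|L u| * rho v1 v2 u)) :=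
  stmt10_general v1 v2 hv1 hv2 L hLmeas hLbdd x1 x2
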